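/- arXiv:1008.0305 — 2 statements merged into one kernel-verified Lean document; each statement's English description precedes it below -/
import Mathlib

section
/- Let p be a prime and let (A, ν) be an integral domain with pA = 0 and a negative pseudovaluation such that every nonzero element of A is localizing with respect to ν. Let α : A → B be an injective ring homomorphism of finite type which is generically finite, in the sense that there exists a nonzero c ∈ A such that the localization B_c is a finite free module over A_c. Equip the finitely generated A-algebra B with an admissible pseudovaluation. Then W(A) ∩ W†(B) = W†(A): a Witt vector x ∈ W(A) is overconvergent if and only if its image W(α)(x) ∈ W(B) is overconvergent. -/
open scoped Classical

noncomputable section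

/-- A pseudovaluation on a commutative ring `A`: a function `ν : A → ℝ ∪ {±∞}` with
`ν 0 = ∞`, `ν 1 = 0`, `ν (a - b) ≥ min (ν a) (ν b)`, and `ν (a*b) ≥ ν a + ν b`
whenever `ν a ≠ -∞` and `ν b ≠ -∞`. -/
structure IsPseudovaluation {A : Type*} [CommRing A] (ν : A → EReal) : Prop where
  map_zero : ν 0 = ⊤
  map_one : ν 1 = 0
  min_le_sub : ∀ a b : A, min (ν a) (ν b) ≤ ν (a - b)
  add_le_mul : ∀ a b : A, ν a ≠ ⊥ → ν b ≠ ⊥ → ν a + ν b ≤ ν (a * b)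

/-- A proper pseudovaluation never takes the value `-∞`. -/
def IsProperPV {A : Type*} [CommRing A] (ν : A → EReal) : Prop :=
  IsPseudovaluation ν ∧ ∀ a : A, ν a ≠ ⊥

/-- A negative pseudovaluation is proper and satisfies `ν a ≤ 0` for `a ≠ 0`. -/
def IsNegativePV {A : Type*} [CommRing A] (ν : A → EReal) : Prop :=
  IsPseudovaluation ν ∧ (∀ a : A, ν a ≠ ⊥) ∧ ∀ a : A, a ≠ 0 → ν a ≤ 0

/-- `f` is localizing with respect to `ν` if there are `C > 0`, `D ≥ 0` with
`ν (fⁿ x) ≤ C · ν x + n D` for all `n` and `x`. -/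
def IsLocalizing {A : Type*} [CommRing A] (ν : A → EReal) (f : A) : Prop :=
  ∃ C D : ℝ, 0 < C ∧ 0 ≤ D ∧ ∀ (n : ℕ) (x : A),
    ν (f ^ n * x) ≤ (C : EReal) * ν x + (((n : ℝ) * D : ℝ) : EReal)

/-- Two functions `A → ℝ ∪ {±∞}` are linearly equivalent if they dominate each other
up to positive multiplicative and nonnegative additive constants. -/
def LinearlyEquivalent {A : Type*} (ν₁ ν₂ : A → EReal) : Prop :=
  ∃ c₁ c₂ d₁ d₂ : ℝ, 0 < c₁ ∧ 0 < c₂ ∧ 0 ≤ d₁ ∧ 0 ≤ d₂ ∧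
    (∀ a : A, (c₂ : EReal) * ν₂ a - (d₂ : EReal) ≤ ν₁ a) ∧
    (∀ a : A, (c₁ : EReal) * ν₁ a - (d₁ : EReal) ≤ ν₂ a)

/-- The weighted degree pseudovaluation on a multivariate polynomial ring:
`ν (Σ_k c_k T^k) = inf_k { μ(c_k) - Σ_i k_i d_i }`. -/
def weightedDegPV {R : Type*} [CommRing R] (μ : R → EReal) {m : ℕ} (d : Fin m → ℝ)
    (f : MvPolynomial (Fin m) R) : EReal :=
  ⨅ k : Fin m →₀ ℕ, (μ (MvPolynomial.coeff k f) - ((∑ i, (k i : ℝ) * d i : ℝ) : EReal))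

/-- A pseudovaluation `τ` on an `R`-algebra `B` is admissible (relative to `μ` on `R`)
if it is the quotient of a weighted degree pseudovaluation under some surjection
from a polynomial ring. -/
def IsAdmissiblePV {R B : Type*} [CommRing R] [CommRing B] [Algebra R B]
    (μ : R → EReal) (τ : B → EReal) : Prop :=
  ∃ (m : ℕ) (π : MvPolynomial (Fin m) R →ₐ[R] B) (d : Fin m → ℝ),
    Function.Surjective π ∧ (∀ i, 0 < d i) ∧
    ∀ b : B, τ b = ⨆ (f : MvPolynomial (Fin m) R) (_ : π f = b), weightedDegPV μ d f

/-- The pseudovaluation `μ (Σ_i a_i X^i) = min_i { ν(a_i) - i·d }` on `A[X]`. -/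
def polyPV {A : Type*} [CommRing A] (ν : A → EReal) (d : ℝ) (g : Polynomial A) : EReal :=
  ⨅ i : ℕ, (ν (g.coeff i) - (((i : ℝ) * d : ℝ) : EReal))

/-- The induced pseudovaluation on the localization `A_f`: the quotient of `polyPV ν d`
under the map `A[X] → A_f`, `X ↦ f⁻¹`. -/
def locPV {A : Type*} [CommRing A] (ν : A → EReal) (f : A) (d : ℝ)
    (z : Localization.Away f) : EReal :=
  ⨆ (g : Polynomial A)
    (_ : Polynomial.aeval (IsLocalization.Away.invSelf (S := Localization.Away f) f) g = z),
    polyPV ν d g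

/-- The Gauss norm `γ_ε(α) = inf_i { i + ε p^{-i} ν(a_i) }` of a Witt vector. -/
def gaussNorm (p : ℕ) {A : Type*} [CommRing A] (ν : A → EReal) (ε : ℝ)
    (α : WittVector p A) : EReal :=
  ⨅ i : ℕ, ((i : EReal) + ((ε * (p : ℝ) ^ (-(i : ℤ)) : ℝ) : EReal) * ν (α.coeff i))

/-- A Witt vector is overconvergent if `γ_ε(α) ≠ -∞` for some `ε > 0`. -/
def IsOverconvergent (p : ℕ) {A : Type*} [CommRing A] (ν : A → EReal)
    (α : WittVector p A) : Prop :=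
  ∃ ε : ℝ, 0 < ε ∧ gaussNorm p ν ε α ≠ ⊥

/-- The trivial valuation on an integral domain: `ν 0 = ∞` and `ν a = 0` for `a ≠ 0`. -/
def trivialPV (K : Type*) [Zero K] : K → EReal :=
  fun a => if a = 0 then (⊤ : EReal) else 0


/-!
On `A` one has `ν ≤ τ`, since a constant polynomial has weighted degree `ν`. Conversely, `ν` is
bounded below by an affine function of `τ` with positive slope; so `ν` and `τ|_A` are linearly
equivalent, and linearly equivalent pseudovaluations have the same overconvergent Witt vectors
(the Gauss norm for `ε / c` dominates the one for `ε`, up to a constant).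

For the lower bound, equip `A_c` with the quotient `w` of `Σ aᵢ Xⁱ ↦ min (ν aᵢ - i)` under
`X ↦ 1/c`; since `c` is localizing, `w` and `ν` are comparable on `A`. If `a = π f` in `B`, the
coordinates of `a • 1` in an `A_c`-basis of `B_c` are sums of coefficients of `f` times
coordinates of monomials in the generators, and multiplying by a generator lowers the `w`-value of
coordinates by at most a constant. This bounds `w (a * e)` for a nonzero coordinate `e` of `1`
linearly in the weighted degree of `f`. Finally `e = y / cⁿ` with `y ≠ 0` in `A`, and `y` being
localizing turns this into a lower bound for `ν a`.
-/

namespace EReal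

lemma exists_nonpos_coe_le {x : EReal} (hx : x ≠ ⊥) : ∃ r : ℝ, r ≤ 0 ∧ (r : EReal) ≤ x :=
  ⟨min x.toReal 0, min_le_right _ _,
    (EReal.coe_le_coe_iff.2 (min_le_left _ _)).trans (coe_toReal_le hx)⟩

lemma exists_nonpos_forall_coe_le {T : Type*} [Finite T] (f : T → EReal) (hf : ∀ t, f t ≠ ⊥) :
    ∃ r : ℝ, r ≤ 0 ∧ ∀ t, (r : EReal) ≤ f t := by
  rcases isEmpty_or_nonempty T with hT | hT
  · exact ⟨0, le_rfl, isEmptyElim⟩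
  obtain ⟨t₀, ht₀⟩ := Finite.exists_min f
  obtain ⟨r, hr, hrt₀⟩ := exists_nonpos_coe_le (hf t₀)
  exact ⟨r, hr, fun t => hrt₀.trans (ht₀ t)⟩

lemma le_sub_coe_iff {a b : EReal} {r : ℝ} : a ≤ b - r ↔ a + r ≤ b :=
  le_sub_iff_add_le (.inl (coe_ne_bot r)) (.inl (coe_ne_top r))

lemma div_le_of_le_mul_add {x : EReal} {C D r : ℝ} (hC : 0 < C) (h : (r : EReal) ≤ C * x + D) :
    (((r - D) / C : ℝ) : EReal) ≤ x := by
  induction x using EReal.rec with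
  | bot => simp [coe_mul_bot_of_pos hC] at h
  | top => exact le_top
  | coe x =>
    rw [← coe_mul, ← coe_add, EReal.coe_le_coe_iff] at h
    exact EReal.coe_le_coe_iff.2 (by rw [div_le_iff₀ hC]; linarith)

lemma mul_sub_le_of_forall_lt {q t : EReal} {K D : ℝ} (hK : 0 < K)
    (h : ∀ s : ℝ, (s : EReal) < q → ((K * s - D : ℝ) : EReal) ≤ t) : (K : EReal) * q - D ≤ t := by
  have hKs : ∀ u : ℝ, K * ((u + D) / K) - D = u := fun u => by field_simp; ring
  induction q using EReal.rec with
  | bot => simp [coe_mul_bot_of_pos hK]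
  | top =>
    rw [coe_mul_top_of_pos hK, top_sub_coe, top_le_iff, eq_top_iff_forall_lt]
    intro u
    have := h ((u + 1 + D) / K) (coe_lt_top _)
    rw [hKs] at this
    exact (EReal.coe_lt_coe_iff.2 (lt_add_one u)).trans_le this
  | coe x =>
    rw [← coe_mul, ← coe_sub, ← ge_of_forall_gt_iff_ge]
    intro u hu
    have hux : (u + D) / K < x := by
      rw [div_lt_iff₀ hK]; have := EReal.coe_lt_coe_iff.1 hu; linarith
    simpa [hKs] using h ((u + D) / K) (EReal.coe_lt_coe_iff.2 hux)

lemma add_mul_sub_le {α β : EReal} {x c d κ e : ℝ} (hc : 0 < c) (hκ : 0 < κ)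
    (he : κ * d / c ≤ e) (h : (c : EReal) * α - d ≤ β) :
    (x + κ * α) - e ≤ (x : EReal) + ((κ / c : ℝ) : EReal) * β := by
  induction α using EReal.rec with
  | bot => simp [coe_mul_bot_of_pos hκ]
  | top =>
    rw [coe_mul_top_of_pos hc, top_sub_coe, top_le_iff] at h
    rw [h, coe_mul_top_of_pos (_root_.div_pos hκ hc : 0 < κ / c), coe_add_top]
    exact le_top
  | coe a =>
    rw [← coe_mul, ← coe_sub] at h
    calc ((x + κ * a - e : ℝ) : EReal) ≤ ((x + κ / c * (c * a - d) : ℝ) : EReal) := by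
          refine EReal.coe_le_coe_iff.2 ?_
          have : κ / c * (c * a - d) = κ * a - κ * d / c := by field_simp
          linarith
      _ ≤ (x : EReal) + ((κ / c : ℝ) : EReal) * β := by
          rw [coe_add, coe_mul]
          gcongr

end EReal

section Pseudovaluation

variable {A : Type*} [CommRing A] {ν : A → EReal}

namespace IsPseudovaluation

variable (hν : IsPseudovaluation ν)
include hν

lemma map_neg (a : A) : ν (-a) = ν a := by
  have h₁ := hν.min_le_sub 0 a
  have h₂ := hν.min_le_sub 0 (-a)
  rw [zero_sub, hν.map_zero, min_top_left] at h₁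
  rw [zero_sub, neg_neg, hν.map_zero, min_top_left] at h₂
  exact le_antisymm h₂ h₁

lemma min_le_add (a b : A) : min (ν a) (ν b) ≤ ν (a + b) := by
  simpa [hν.map_neg] using hν.min_le_sub a (-b)

lemma le_sum {ι : Type*} (s : Finset ι) (f : ι → A) {r : EReal} (h : ∀ i ∈ s, r ≤ ν (f i)) :
    r ≤ ν (∑ i ∈ s, f i) := by
  classical
  induction s using Finset.induction_on with
  | empty => simp [hν.map_zero]
  | insert i s hi ih =>
    rw [Finset.sum_insert hi]
    exact le_trans (le_min (h i (s.mem_insert_self i))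
      (ih fun j hj => h j (Finset.mem_insert_of_mem hj))) (hν.min_le_add _ _)

end IsPseudovaluation

lemma IsNegativePV.isProperPV (hν : IsNegativePV ν) : IsProperPV ν := ⟨hν.1, hν.2.1⟩

namespace IsProperPV

variable (hν : IsProperPV ν)
include hν

lemma add_le_mul (a b : A) : ν a + ν b ≤ ν (a * b) := hν.1.add_le_mul a b (hν.2 a) (hν.2 b)

lemma nat_mul_le_pow {a : A} {v : ℝ} (hv : (v : EReal) ≤ ν a) (n : ℕ) :
    ((n * v : ℝ) : EReal) ≤ ν (a ^ n) := by
  induction n with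
  | zero => simp [hν.1.map_one]
  | succ n ih =>
    rw [pow_succ, Nat.cast_succ, add_one_mul, EReal.coe_add]
    exact (add_le_add ih hv).trans (hν.add_le_mul _ _)

end IsProperPV

end Pseudovaluation

section Quotient

variable {R S F : Type*} [FunLike F R S] (π : F) (ν : R → EReal)

def quotientPV (s : S) : EReal := ⨆ (r : R) (_ : π r = s), ν r

variable {π ν}

lemma le_quotientPV {r : R} {s : S} (h : π r = s) : ν r ≤ quotientPV π ν s :=
  le_iSup₂ (f := fun r (_ : π r = s) => ν r) r h

lemma quotientPV_le {s : S} {t : EReal} (h : ∀ r, π r = s → ν r ≤ t) : quotientPV π ν s ≤ t :=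
  iSup₂_le h

lemma exists_lt_of_lt_quotientPV {s : S} {v : EReal} (h : v < quotientPV π ν s) :
    ∃ r, π r = s ∧ v < ν r := by
  simpa [quotientPV, lt_iSup_iff] using h

lemma mul_quotientPV_sub_le {s : S} {t : EReal} {K D : ℝ} (hK : 0 < K)
    (h : ∀ r (u : ℝ), π r = s → (u : EReal) ≤ ν r → ((K * u - D : ℝ) : EReal) ≤ t) :
    (K : EReal) * quotientPV π ν s - D ≤ t :=
  EReal.mul_sub_le_of_forall_lt hK fun u hu =>
    let ⟨r, hr, hur⟩ := exists_lt_of_lt_quotientPV hu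
    h r u hr hur.le

theorem isNegativePV_quotientPV [CommRing R] [CommRing S] [Nontrivial S] [RingHomClass F R S]
    (hν : IsNegativePV ν) (hπ : Function.Surjective π) : IsNegativePV (quotientPV π ν) := by
  have hne_zero : ∀ {r s}, s ≠ 0 → π r = s → r ≠ 0 := fun hs hr h => hs (by simp [← hr, h])
  refine ⟨⟨?_, ?_, fun s₁ s₂ => ?_, fun s₁ s₂ _ _ => ?_⟩, fun s => ?_, fun s hs => ?_⟩
  · exact top_le_iff.1 (hν.1.map_zero ▸ le_quotientPV (map_zero π))
  · exact le_antisymm (quotientPV_le fun r hr => hν.2.2 r (hne_zero one_ne_zero hr))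
      (hν.1.map_one ▸ le_quotientPV (map_one π))
  · refine le_of_forall_lt fun v hv => ?_
    obtain ⟨r₁, rfl, h₁⟩ := exists_lt_of_lt_quotientPV (lt_min_iff.1 hv).1
    obtain ⟨r₂, rfl, h₂⟩ := exists_lt_of_lt_quotientPV (lt_min_iff.1 hv).2
    exact (lt_min h₁ h₂).trans_le ((hν.1.min_le_sub r₁ r₂).trans (le_quotientPV (map_sub π _ _)))
  · refine EReal.add_le_of_forall_lt fun v₁ hv₁ v₂ hv₂ => ?_
    obtain ⟨r₁, rfl, h₁⟩ := exists_lt_of_lt_quotientPV hv₁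
    obtain ⟨r₂, rfl, h₂⟩ := exists_lt_of_lt_quotientPV hv₂
    exact (add_le_add h₁.le h₂.le).trans
      ((hν.isProperPV.add_le_mul r₁ r₂).trans (le_quotientPV (map_mul π _ _)))
  · obtain ⟨r, rfl⟩ := hπ s
    exact ne_bot_of_le_ne_bot (hν.2.1 r) (le_quotientPV rfl)
  · exact quotientPV_le fun r hr => hν.2.2 r (hne_zero hs hr)

end Quotient

section PolyPV

open Polynomial

variable {A : Type*} [CommRing A] {ν : A → EReal} {d : ℝ}

lemma polyPV_le (g : A[X]) (i : ℕ) : polyPV ν d g ≤ ν (g.coeff i) - ((i * d : ℝ) : EReal) :=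
  iInf_le _ i

lemma polyPV_add_le (g : A[X]) (i : ℕ) : polyPV ν d g + ((i * d : ℝ) : EReal) ≤ ν (g.coeff i) :=
  EReal.le_sub_coe_iff.1 (polyPV_le g i)

lemma le_polyPV {g : A[X]} {t : EReal} (h : ∀ i : ℕ, t + ((i * d : ℝ) : EReal) ≤ ν (g.coeff i)) :
    t ≤ polyPV ν d g :=
  le_iInf fun i => EReal.le_sub_coe_iff.2 (h i)

lemma polyPV_C (hν : IsPseudovaluation ν) (x : A) : polyPV ν d (C x) = ν x := by
  refine le_antisymm (by simpa using polyPV_le (ν := ν) (d := d) (C x) 0) (le_polyPV fun i => ?_)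
  rcases eq_or_ne i 0 with rfl | hi
  · simp
  · simp [coeff_C, hi, hν.map_zero]

lemma polyPV_le_neg_natDegree_mul (hν : IsNegativePV ν) {g : A[X]} (hg : g ≠ 0) :
    polyPV ν d g ≤ ((-(g.natDegree * d) : ℝ) : EReal) := by
  refine (polyPV_le g g.natDegree).trans ?_
  rw [EReal.coe_neg, ← zero_sub]
  exact EReal.sub_le_sub (hν.2.2 _ (leadingCoeff_ne_zero.2 hg)) le_rfl

lemma min_polyPV_le_sub (hν : IsPseudovaluation ν) (g₁ g₂ : A[X]) :
    min (polyPV ν d g₁) (polyPV ν d g₂) ≤ polyPV ν d (g₁ - g₂) := by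
  refine le_polyPV fun i => ?_
  rw [← min_add_add_right, coeff_sub]
  exact (min_le_min (polyPV_add_le _ _) (polyPV_add_le _ _)).trans (hν.min_le_sub _ _)

lemma polyPV_add_polyPV_le_mul (hν : IsProperPV ν) (g₁ g₂ : A[X]) :
    polyPV ν d g₁ + polyPV ν d g₂ ≤ polyPV ν d (g₁ * g₂) := by
  refine le_polyPV fun k => ?_
  rw [coeff_mul]
  refine hν.1.le_sum _ _ fun ij hij => ?_
  have hk : (k * d : ℝ) = ij.1 * d + ij.2 * d := by
    rw [← Finset.HasAntidiagonal.mem_antidiagonal.1 hij]; push_cast; ring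
  calc polyPV ν d g₁ + polyPV ν d g₂ + ((k * d : ℝ) : EReal)
      = (polyPV ν d g₁ + ((ij.1 * d : ℝ) : EReal)) +
          (polyPV ν d g₂ + ((ij.2 * d : ℝ) : EReal)) := by
        rw [hk, EReal.coe_add]; abel
    _ ≤ ν (g₁.coeff ij.1) + ν (g₂.coeff ij.2) :=
        add_le_add (polyPV_add_le _ _) (polyPV_add_le _ _)
    _ ≤ ν (g₁.coeff ij.1 * g₂.coeff ij.2) := hν.add_le_mul _ _

lemma polyPV_ne_bot (hν : IsProperPV ν) (hd : 0 ≤ d) (g : A[X]) : polyPV ν d g ≠ ⊥ := by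
  obtain ⟨r, -, hr⟩ := EReal.exists_nonpos_forall_coe_le
    (fun i : Fin (g.natDegree + 1) => ν (g.coeff i)) fun i => hν.2 _
  refine ne_bot_of_le_ne_bot (EReal.coe_ne_bot (r - g.natDegree * d)) (le_polyPV fun i => ?_)
  rcases le_or_gt i g.natDegree with hi | hi
  · refine le_trans ?_ (hr ⟨i, Nat.lt_succ_of_le hi⟩)
    rw [← EReal.coe_add, EReal.coe_le_coe_iff]
    nlinarith [(Nat.cast_le (α := ℝ)).2 hi]
  · simp [coeff_eq_zero_of_natDegree_lt hi, hν.1.map_zero]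

theorem isNegativePV_polyPV (hν : IsNegativePV ν) (hd : 0 ≤ d) : IsNegativePV (polyPV ν d) :=
  ⟨⟨top_le_iff.1 (le_polyPV fun i => by simp [hν.1.map_zero]),
      by simpa [hν.1.map_one] using polyPV_C (d := d) hν.1 (1 : A),
      min_polyPV_le_sub hν.1, fun g₁ g₂ _ _ => polyPV_add_polyPV_le_mul hν.isProperPV g₁ g₂⟩,
    polyPV_ne_bot hν.isProperPV hd,
    fun g hg => (polyPV_le_neg_natDegree_mul hν hg).trans
      (EReal.coe_nonpos.2 (neg_nonpos.2 (mul_nonneg (Nat.cast_nonneg _) hd)))⟩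

lemma add_natDegree_mul_le_sum_coeff_mul_pow (hν : IsProperPV ν) (hd : 0 ≤ d) {c : A} {v s : ℝ}
    (hv0 : v ≤ 0) (hv : (v : EReal) ≤ ν c) {g : A[X]} (hs : (s : EReal) ≤ polyPV ν d g) :
    ((s + g.natDegree * v : ℝ) : EReal) ≤
      ν (∑ i ∈ Finset.range (g.natDegree + 1), g.coeff i * c ^ (g.natDegree - i)) := by
  refine hν.1.le_sum _ _ fun i hi => ?_
  have hiN : i ≤ g.natDegree := Nat.lt_succ_iff.1 (Finset.mem_range.1 hi)
  calc ((s + g.natDegree * v : ℝ) : EReal)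
      ≤ ((s + i * d + ((g.natDegree - i : ℕ) : ℝ) * v : ℝ) : EReal) := by
        rw [EReal.coe_le_coe_iff, Nat.cast_sub hiN]
        nlinarith [(Nat.cast_nonneg i : (0 : ℝ) ≤ i)]
    _ ≤ ν (g.coeff i) + ν (c ^ (g.natDegree - i)) := by
        rw [EReal.coe_add, EReal.coe_add]
        exact add_le_add ((add_le_add hs le_rfl).trans (polyPV_add_le g i))
          (hν.nat_mul_le_pow hv _)
    _ ≤ ν (g.coeff i * c ^ (g.natDegree - i)) := hν.add_le_mul _ _

end PolyPV

section Localization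

open Polynomial IsLocalization.Away

variable {A : Type*} [CommRing A] (c : A)

lemma aeval_invSelf_surjective (S : Type*) [CommRing S] [Algebra A S] [IsLocalization.Away c S] :
    Function.Surjective (aeval (invSelf (S := S) c) : A[X] → S) := by
  intro z
  obtain ⟨n, a, h⟩ := surj c z
  refine ⟨C a * X ^ n, ?_⟩
  rw [map_mul, aeval_C, map_pow, aeval_X, ← h, mul_assoc, ← mul_pow, mul_invSelf, one_pow,
    mul_one]

lemma algebraMap_pow_mul_aeval_invSelf {S : Type*} [CommRing S] [Algebra A S]
    [IsLocalization.Away c S] (g : A[X]) :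
    algebraMap A S c ^ g.natDegree * aeval (invSelf (S := S) c) g =
      algebraMap A S (∑ i ∈ Finset.range (g.natDegree + 1), g.coeff i * c ^ (g.natDegree - i)) := by
  rw [aeval_eq_sum_range, Finset.mul_sum, map_sum]
  refine Finset.sum_congr rfl fun i hi => ?_
  obtain ⟨j, hj⟩ := Nat.exists_eq_add_of_le (Nat.lt_succ_iff.1 (Finset.mem_range.1 hi))
  rw [hj, Nat.add_sub_cancel_left, pow_add, Algebra.smul_def, map_mul, map_pow]
  calc algebraMap A S c ^ i * algebraMap A S c ^ j * (algebraMap A S (g.coeff i) * invSelf c ^ i)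
      = (algebraMap A S c * invSelf c) ^ i *
          (algebraMap A S (g.coeff i) * algebraMap A S c ^ j) := by ring
    _ = _ := by rw [mul_invSelf, one_pow, one_mul]

variable {ν : A → EReal} {d : ℝ}

lemma locPV_eq_quotientPV :
    locPV ν c d = quotientPV (aeval (invSelf (S := Localization.Away c) c)) (polyPV ν d) :=
  rfl

theorem isNegativePV_locPV [Nontrivial (Localization.Away c)] (hν : IsNegativePV ν) (hd : 0 ≤ d) :
    IsNegativePV (locPV ν c d) :=
  isNegativePV_quotientPV (isNegativePV_polyPV hν hd) (aeval_invSelf_surjective c _)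

lemma le_locPV_algebraMap (hν : IsPseudovaluation ν) (x : A) :
    ν x ≤ locPV ν c d (algebraMap A (Localization.Away c) x) :=
  polyPV_C (d := d) hν x ▸ le_quotientPV (aeval_C _ x)

end Localization

section Localizing

open Polynomial

variable {A : Type*} [CommRing A] [IsDomain A] {ν : A → EReal} {d : ℝ}

theorem exists_mul_locPV_le (hν : IsNegativePV ν) {c : A} (hc : c ≠ 0) (hcl : IsLocalizing ν c)
    (hd : 0 < d) :
    ∃ K : ℝ, 0 < K ∧
      ∀ x : A, (K : EReal) * locPV ν c d (algebraMap A (Localization.Away c) x) ≤ ν x := by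
  obtain ⟨C, D, hC, hD, hCD⟩ := hcl
  obtain ⟨v, hv0, hv⟩ := EReal.exists_nonpos_coe_le (hν.2.1 c)
  have hι : Function.Injective (algebraMap A (Localization.Away c)) :=
    IsLocalization.injective _ (powers_le_nonZeroDivisors_of_noZeroDivisors hc)
  have hK : 0 < (d + D - v) / (C * d) := by apply div_pos <;> nlinarith
  refine ⟨_, hK, fun x => ?_⟩
  rcases eq_or_ne x 0 with rfl | hx
  · simp [hν.1.map_zero]
  rw [locPV_eq_quotientPV]
  refine (sub_zero _).symm.trans_le (mul_quotientPV_sub_le hK fun g s hg hs => ?_)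
  rw [sub_zero]
  have hg0 : g ≠ 0 := by rintro rfl; exact hx (hι (by simp [← hg]))
  set N := g.natDegree
  have hsN : s ≤ -(N * d) :=
    EReal.coe_le_coe_iff.1 (hs.trans (polyPV_le_neg_natDegree_mul hν hg0))
  have hrev : c ^ N * x = ∑ i ∈ Finset.range (N + 1), g.coeff i * c ^ (N - i) :=
    hι (by rw [map_mul, map_pow, ← hg, algebraMap_pow_mul_aeval_invSelf])
  have hlow := add_natDegree_mul_le_sum_coeff_mul_pow hν.isProperPV hd.le hv0 hv hs
  rw [← hrev] at hlow
  refine le_trans (EReal.coe_le_coe_iff.2 ?_)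
    (EReal.div_le_of_le_mul_add hC (hlow.trans (hCD N x)))
  have key : (s + N * v - N * D) / C - (d + D - v) / (C * d) * s =
      (v - D) * (N * d + s) / (C * d) := by
    field_simp; ring
  have : 0 ≤ (v - D) * (N * d + s) / (C * d) :=
    div_nonneg (mul_nonneg_of_nonpos_of_nonpos (by linarith) (by linarith)) (by positivity)
  linarith

theorem exists_le_of_le_locPV_mul (hν : IsNegativePV ν) (hloc : ∀ a : A, a ≠ 0 → IsLocalizing ν a)
    {c : A} (hc : c ≠ 0) (hd : 0 < d) {e : Localization.Away c} (he : e ≠ 0) :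
    ∃ K D : ℝ, 0 < K ∧ ∀ (a : A) (t : ℝ),
      (t : EReal) ≤ locPV ν c d (algebraMap A _ a * e) → ((K * t - D : ℝ) : EReal) ≤ ν a := by
  have : IsDomain (Localization.Away c) :=
    IsLocalization.isDomain_localization (powers_le_nonZeroDivisors_of_noZeroDivisors hc)
  have hw := isNegativePV_locPV c hν hd.le
  obtain ⟨n, y, hy⟩ := IsLocalization.Away.surj c e
  have hy0 : y ≠ 0 := by
    rintro rfl
    rw [map_zero, (IsLocalization.Away.algebraMap_pow_isUnit c n).mul_left_eq_zero] at hy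
    exact he hy
  obtain ⟨G, -, hG⟩ := EReal.exists_nonpos_coe_le (hw.2.1 (algebraMap A _ c ^ n))
  obtain ⟨K, hK, hKν⟩ := exists_mul_locPV_le hν hc (hloc c hc) hd
  obtain ⟨C, D, hC, -, hCD⟩ := hloc y hy0
  refine ⟨K / C, (D - K * G) / C, div_pos hK hC, fun a t ht => ?_⟩
  have hay : ((K * (t + G) : ℝ) : EReal) ≤ ν (y ^ 1 * a) := by
    calc ((K * (t + G) : ℝ) : EReal) = (K : EReal) * ((t : EReal) + G) := by push_cast; rfl
      _ ≤ K * locPV ν c d (algebraMap A _ (a * y)) := by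
          rw [map_mul, ← hy, ← mul_assoc]
          exact mul_le_mul_of_nonneg_left ((add_le_add ht hG).trans (hw.isProperPV.add_le_mul _ _))
            (EReal.coe_nonneg.2 hK.le)
      _ ≤ ν (y ^ 1 * a) := by rw [pow_one, mul_comm y a]; exact hKν _
  convert EReal.div_le_of_le_mul_add hC (hay.trans (hCD 1 a)) using 2
  push_cast
  field_simp
  ring

end Localizing

section Coordinates

variable {L M I : Type*} [CommRing L] [CommRing M] [Algebra L M] (w : L → EReal)
  (bs : Module.Basis I L M)

def IsCoordLowerBound (t : ℝ) (v : M) : Prop := ∀ j, (t : EReal) ≤ w (bs.repr v j)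

variable {w bs}

namespace IsCoordLowerBound

lemma mono {t t' : ℝ} {v : M} (hv : IsCoordLowerBound w bs t v) (h : t' ≤ t) :
    IsCoordLowerBound w bs t' v :=
  fun j => (EReal.coe_le_coe_iff.2 h).trans (hv j)

lemma smul (hw : IsProperPV w) {a t : ℝ} {l : L} {v : M} (hl : (a : EReal) ≤ w l)
    (hv : IsCoordLowerBound w bs t v) : IsCoordLowerBound w bs (a + t) (l • v) := fun j => by
  rw [map_smul, Finsupp.smul_apply, smul_eq_mul, EReal.coe_add]
  exact (add_le_add hl (hv j)).trans (hw.add_le_mul _ _)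

lemma mul_pow {E t : ℝ} {v y : M}
    (hy : ∀ v t, IsCoordLowerBound w bs t v → IsCoordLowerBound w bs (t - E) (v * y))
    (hv : IsCoordLowerBound w bs t v) (n : ℕ) : IsCoordLowerBound w bs (t - n * E) (v * y ^ n) := by
  induction n with
  | zero => simpa using hv
  | succ n ih =>
    rw [pow_succ, ← mul_assoc]
    exact (hy _ _ ih).mono (by push_cast; linarith)

lemma mul_prod_pow {σ : Type*} {y : σ → M} {δ : σ → ℝ}
    (hy : ∀ i v t, IsCoordLowerBound w bs t v → IsCoordLowerBound w bs (t - δ i) (v * y i))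
    (k : σ → ℕ) (s : Finset σ) {t : ℝ} {v : M} (hv : IsCoordLowerBound w bs t v) :
    IsCoordLowerBound w bs (t - ∑ i ∈ s, k i * δ i) (v * ∏ i ∈ s, y i ^ k i) := by
  classical
  induction s using Finset.induction_on generalizing t v with
  | empty => simpa using hv
  | insert a s ha ih =>
    rw [Finset.prod_insert ha, ← mul_assoc, Finset.sum_insert ha]
    exact (ih (hv.mul_pow (hy a) (k a))).mono (by linarith)

end IsCoordLowerBound

lemma isCoordLowerBound_sum (hw : IsPseudovaluation w) {ι : Type*} (s : Finset ι) (v : ι → M)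
    {t : ℝ} (h : ∀ i ∈ s, IsCoordLowerBound w bs t (v i)) :
    IsCoordLowerBound w bs t (∑ i ∈ s, v i) := fun j => by
  rw [map_sum, Finsupp.finsetSum_apply]
  exact hw.le_sum _ _ fun i hi => h i hi j

lemma exists_isCoordLowerBound [Finite I] (hw : ∀ a, w a ≠ ⊥) (v : M) :
    ∃ r, IsCoordLowerBound w bs r v :=
  let ⟨r, _, hr⟩ := EReal.exists_nonpos_forall_coe_le _ fun j => hw (bs.repr v j)
  ⟨r, hr⟩

lemma exists_isCoordLowerBound_mul [Fintype I] (hw : IsProperPV w) (y : M) :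
    ∃ E : ℝ, 0 ≤ E ∧
      ∀ v t, IsCoordLowerBound w bs t v → IsCoordLowerBound w bs (t - E) (v * y) := by
  obtain ⟨r, hr0, hr⟩ := EReal.exists_nonpos_forall_coe_le
    (fun lj : I × I => w (bs.repr (bs lj.1 * y) lj.2)) fun _ => hw.2 _
  refine ⟨-r, neg_nonneg.2 hr0, fun v t hv => ?_⟩
  have hvy : v * y = ∑ l, bs.repr v l • (bs l * y) := by
    conv_lhs => rw [← bs.sum_repr v]
    simp only [Finset.sum_mul, smul_mul_assoc]
  rw [hvy, sub_neg_eq_add]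
  exact isCoordLowerBound_sum hw.1 _ _ fun l _ => (IsCoordLowerBound.smul hw (hv l)
    fun j => hr (l, j))

end Coordinates

section WeightedDegree

open MvPolynomial

variable {A L M I : Type*} [CommRing A] [CommRing L] [CommRing M] [Algebra A L] [Algebra L M]
  [Fintype I] {ν : A → EReal} {w : L → EReal} {m : ℕ} {d : Fin m → ℝ}

lemma weightedDegPV_add_le (f : MvPolynomial (Fin m) A) (k : Fin m →₀ ℕ) :
    weightedDegPV ν d f + ((∑ i, (k i : ℝ) * d i : ℝ) : EReal) ≤ ν (coeff k f) :=
  EReal.le_sub_coe_iff.1 (iInf_le _ k)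

lemma weightedDegPV_C (hν : IsPseudovaluation ν) (x : A) : weightedDegPV ν d (C x) = ν x := by
  refine le_antisymm ((iInf_le _ 0).trans (by simp)) (le_iInf fun k => ?_)
  rcases eq_or_ne k 0 with rfl | hk
  · simp
  · simp [coeff_C, Ne.symm hk, hν.map_zero]

theorem exists_isCoordLowerBound_of_le_weightedDegPV (hν : IsNegativePV ν) (hw : IsProperPV w)
    (hνw : ∀ x, ν x ≤ w (algebraMap A L x)) (bs : Module.Basis I L M)
    (Φ : MvPolynomial (Fin m) A →+* M) (hΦ : ∀ x, Φ (C x) = algebraMap L M (algebraMap A L x))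
    (hd : ∀ i, 0 < d i) :
    ∃ κ r : ℝ, 0 ≤ κ ∧ ∀ f (s : ℝ), (s : EReal) ≤ weightedDegPV ν d f →
      IsCoordLowerBound w bs ((1 + κ) * s + r) (Φ f) := by
  choose E hE0 hE using fun i => exists_isCoordLowerBound_mul (bs := bs) hw (Φ (X i))
  -- weighting the generators by `d` turns the number of factors into the weighted degree
  set κ := ∑ i, E i / d i
  have hκ0 : 0 ≤ κ := Finset.sum_nonneg fun i _ => div_nonneg (hE0 i) (hd i).le
  have hEκ : ∀ i, E i ≤ κ * d i := fun i => (div_le_iff₀ (hd i)).1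
    (Finset.single_le_sum (fun j _ => div_nonneg (hE0 j) (hd j).le) (Finset.mem_univ i))
  obtain ⟨r, hr⟩ := exists_isCoordLowerBound (bs := bs) hw.2 1
  have hmon : ∀ k : Fin m →₀ ℕ,
      IsCoordLowerBound w bs (r - κ * ∑ i, (k i : ℝ) * d i) (Φ (monomial k 1)) := by
    intro k
    have := hr.mul_prod_pow (y := fun i => Φ (X i)) (δ := fun i => κ * d i)
      (fun i v t hv => (hE i v t hv).mono (by linarith [hEκ i])) k Finset.univ
    rw [monomial_eq, C_1, one_mul, Finsupp.prod_fintype _ _ fun _ => pow_zero _, map_prod]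
    simpa [Finset.mul_sum, mul_left_comm] using this
  refine ⟨κ, r, hκ0, fun f s hs => ?_⟩
  rw [f.as_sum, map_sum]
  refine isCoordLowerBound_sum hw.1 _ _ fun k hk => ?_
  set S := ∑ i, (k i : ℝ) * d i
  have hS0 : 0 ≤ S := Finset.sum_nonneg fun i _ => mul_nonneg (Nat.cast_nonneg _) (hd i).le
  have hsS : ((s + S : ℝ) : EReal) ≤ ν (coeff k f) :=
    EReal.coe_add s S ▸ (add_le_add hs le_rfl).trans (weightedDegPV_add_le f k)
  have hsS0 : s + S ≤ 0 := EReal.coe_le_coe_iff.1 (hsS.trans (hν.2.2 _ (mem_support_iff.1 hk)))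
  rw [← mul_one (coeff k f), ← C_mul_monomial, map_mul, hΦ, ← Algebra.smul_def]
  exact ((hmon k).smul hw (hsS.trans (hνw _))).mono
    (by nlinarith [mul_nonpos_of_nonneg_of_nonpos hκ0 hsS0])

end WeightedDegree

section Overconvergence

variable (p : ℕ) {A B : Type*} [CommRing A] [CommRing B] {ν₁ ν₂ : A → EReal}

lemma gaussNorm_sub_le (hp : 0 < p) {c d ε : ℝ} (hc : 0 < c) (hd : 0 ≤ d) (hε : 0 < ε)
    (h : ∀ a, (c : EReal) * ν₂ a - d ≤ ν₁ a) (x : WittVector p A) :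
    gaussNorm p ν₂ ε x - ((ε * d / c : ℝ) : EReal) ≤ gaussNorm p ν₁ (ε / c) x := by
  refine le_iInf fun i => (EReal.sub_le_sub (iInf_le _ i) le_rfl).trans ?_
  have hq : (p : ℝ) ^ (-(i : ℤ)) ≤ 1 :=
    zpow_le_one_of_nonpos₀ (Nat.one_le_cast.2 hp) (neg_nonpos.2 (Nat.cast_nonneg i))
  have hκ : 0 < ε * (p : ℝ) ^ (-(i : ℤ)) := mul_pos hε (zpow_pos (Nat.cast_pos.2 hp) _)
  rw [← EReal.coe_natCast, div_mul_eq_mul_div]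
  refine EReal.add_mul_sub_le hc hκ ?_ (h _)
  exact div_le_div_of_nonneg_right
    (mul_le_mul_of_nonneg_right (mul_le_of_le_one_right hε.le hq) hd) hc.le

variable {p}

lemma IsOverconvergent.of_mul_sub_le (hp : 0 < p) {c d : ℝ} (hc : 0 < c) (hd : 0 ≤ d)
    (h : ∀ a, (c : EReal) * ν₂ a - d ≤ ν₁ a) {x : WittVector p A}
    (hx : IsOverconvergent p ν₂ x) : IsOverconvergent p ν₁ x := by
  obtain ⟨ε, hε, hx⟩ := hx
  refine ⟨ε / c, div_pos hε hc, ne_bot_of_le_ne_bot ?_ (gaussNorm_sub_le p hp hc hd hε h x)⟩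
  rw [sub_eq_add_neg, ← EReal.coe_neg]
  exact EReal.add_ne_bot_iff.2 ⟨hx, EReal.coe_ne_bot _⟩

theorem LinearlyEquivalent.isOverconvergent_iff (hp : 0 < p) (h : LinearlyEquivalent ν₁ ν₂)
    (x : WittVector p A) : IsOverconvergent p ν₁ x ↔ IsOverconvergent p ν₂ x :=
  let ⟨_, _, _, _, hc₁, hc₂, hd₁, hd₂, h₂₁, h₁₂⟩ := h
  ⟨.of_mul_sub_le hp hc₁ hd₁ h₁₂, .of_mul_sub_le hp hc₂ hd₂ h₂₁⟩

lemma isOverconvergent_map_iff [Fact p.Prime] (f : A →+* B) (τ : B → EReal) (x : WittVector p A) :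
    IsOverconvergent p τ (WittVector.map f x) ↔ IsOverconvergent p (τ ∘ f) x := by
  simp [IsOverconvergent, gaussNorm, WittVector.map_coeff]

end Overconvergence

lemma nontrivial_away_of_not_isNilpotent {R : Type*} [CommRing R] {b : R} (hb : ¬IsNilpotent b) :
    Nontrivial (Localization.Away b) := by
  rw [← not_subsingleton_iff_nontrivial,
    IsLocalization.subsingleton_iff (M := Submonoid.powers b) (S := Localization.Away b)]
  rintro ⟨n, hn⟩
  exact hb ⟨n, hn⟩

lemma Module.Basis.exists_repr_one_ne_zero {L M I : Type*} [CommRing L] [CommRing M] [Nontrivial M]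
    [Algebra L M] (bs : Module.Basis I L M) : ∃ j, bs.repr 1 j ≠ 0 := by
  simpa using Finsupp.ne_iff.1 (bs.repr.map_ne_zero_iff.2 one_ne_zero)

section Admissible

open MvPolynomial

variable {A B : Type*} [CommRing A] [CommRing B] [Algebra A B] {ν : A → EReal} {τ : B → EReal}

lemma le_comp_algebraMap_of_isAdmissiblePV (hν : IsPseudovaluation ν) (hτ : IsAdmissiblePV ν τ)
    (a : A) : ν a ≤ τ (algebraMap A B a) := by
  obtain ⟨m, π, d, -, -, hτeq⟩ := hτ
  rw [hτeq, ← weightedDegPV_C (d := d) hν a]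
  exact le_quotientPV (π := π) (algebraMap_eq (R := A) (σ := Fin m) ▸ π.commutes a)

theorem exists_mul_sub_le_of_isAdmissiblePV [IsDomain A] (hν : IsNegativePV ν)
    (hloc : ∀ a : A, a ≠ 0 → IsLocalizing ν a) (hinj : Function.Injective (algebraMap A B))
    (hgenfin : ∃ c : A, c ≠ 0 ∧
      (@Module.Finite (Localization.Away c) (Localization.Away (algebraMap A B c)) _ _
        (@Algebra.toModule _ _ _ _ ((Localization.awayMap (algebraMap A B) c).toAlgebra)) ∧
       @Module.Free (Localization.Away c) (Localization.Away (algebraMap A B c)) _ _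
        (@Algebra.toModule _ _ _ _ ((Localization.awayMap (algebraMap A B) c).toAlgebra))))
    (hτ : IsAdmissiblePV ν τ) :
    ∃ K D : ℝ, 0 < K ∧ ∀ a, (K : EReal) * τ (algebraMap A B a) - D ≤ ν a := by
  obtain ⟨c, hc, hfin, hfree⟩ := hgenfin
  obtain ⟨m, π, d, -, hd, hτeq⟩ := hτ
  obtain rfl : τ = quotientPV π (weightedDegPV ν d) := funext hτeq
  let := (Localization.awayMap (algebraMap A B) c).toAlgebra
  have : IsDomain (Localization.Away c) :=
    IsLocalization.isDomain_localization (powers_le_nonZeroDivisors_of_noZeroDivisors hc)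
  have : Nontrivial (Localization.Away (algebraMap A B c)) :=
    nontrivial_away_of_not_isNilpotent fun h => hc ((IsNilpotent.map_iff hinj).1 h).eq_zero
  have hw := isNegativePV_locPV c hν zero_le_one
  have hcomm : ∀ x, algebraMap (Localization.Away c) (Localization.Away (algebraMap A B c))
      (algebraMap A _ x) = algebraMap B _ (algebraMap A B x) := fun x => by
    rw [RingHom.algebraMap_toAlgebra]
    exact IsLocalization.map_eq _ _
  let bs := Module.Free.chooseBasis (Localization.Away c) (Localization.Away (algebraMap A B c))
  obtain ⟨j, hj⟩ := bs.exists_repr_one_ne_zero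
  obtain ⟨κ, r, hκ, hbound⟩ := exists_isCoordLowerBound_of_le_weightedDegPV hν hw.isProperPV
    (le_locPV_algebraMap c hν.1) bs ((algebraMap B _).comp π.toRingHom)
    (fun x => by simp [← hcomm]) hd
  obtain ⟨K, D, hK, hKD⟩ := exists_le_of_le_locPV_mul hν hloc hc one_pos hj
  refine ⟨K * (1 + κ), D - K * r, by positivity, fun a => ?_⟩
  refine mul_quotientPV_sub_le (by positivity) fun f s hf hs => ?_
  have := hbound f s hs j
  rw [RingHom.comp_apply, AlgHom.toRingHom_eq_coe, RingHom.coe_coe, hf, ← hcomm a,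
    Algebra.algebraMap_eq_smul_one (algebraMap A _ a), map_smul, Finsupp.smul_apply,
    smul_eq_mul] at this
  convert hKD a _ this using 2
  ring

theorem linearlyEquivalent_comp_algebraMap [IsDomain A] (hν : IsNegativePV ν)
    (hloc : ∀ a : A, a ≠ 0 → IsLocalizing ν a) (hinj : Function.Injective (algebraMap A B))
    (hgenfin : ∃ c : A, c ≠ 0 ∧
      (@Module.Finite (Localization.Away c) (Localization.Away (algebraMap A B c)) _ _
        (@Algebra.toModule _ _ _ _ ((Localization.awayMap (algebraMap A B) c).toAlgebra)) ∧
       @Module.Free (Localization.Away c) (Localization.Away (algebraMap A B c)) _ _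
        (@Algebra.toModule _ _ _ _ ((Localization.awayMap (algebraMap A B) c).toAlgebra))))
    (hτ : IsAdmissiblePV ν τ) : LinearlyEquivalent ν (τ ∘ algebraMap A B) := by
  obtain ⟨K, D, hK, hKD⟩ := exists_mul_sub_le_of_isAdmissiblePV hν hloc hinj hgenfin hτ
  refine ⟨1, K, 0, max D 0, one_pos, hK, le_rfl, le_max_right _ _, fun a => ?_, fun a => ?_⟩
  · exact (EReal.sub_le_sub le_rfl (EReal.coe_le_coe_iff.2 (le_max_left _ _))).trans (hKD a)
  · simpa using le_comp_algebraMap_of_isAdmissiblePV hν.1 hτ a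

end Admissible

theorem statement14_general (p : ℕ) [Fact p.Prime] (A B : Type*)
    [CommRing A] [IsDomain A] [CommRing B] [Algebra A B]
    (ν : A → EReal) (hν : IsNegativePV ν)
    (hloc : ∀ a : A, a ≠ 0 → IsLocalizing ν a)
    (hinj : Function.Injective (algebraMap A B))
    (hgenfin : ∃ c : A, c ≠ 0 ∧
      (@Module.Finite (Localization.Away c) (Localization.Away (algebraMap A B c)) _ _
        (@Algebra.toModule _ _ _ _ ((Localization.awayMap (algebraMap A B) c).toAlgebra)) ∧
       @Module.Free (Localization.Away c) (Localization.Away (algebraMap A B c)) _ _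
        (@Algebra.toModule _ _ _ _ ((Localization.awayMap (algebraMap A B) c).toAlgebra))))
    (τ : B → EReal) (hτ : IsAdmissiblePV ν τ) :
    ∀ x : WittVector p A, IsOverconvergent p ν x ↔
      IsOverconvergent p τ (WittVector.map (algebraMap A B) x) := by
  intro x
  rw [isOverconvergent_map_iff]
  exact (linearlyEquivalent_comp_algebraMap hν hloc hinj hgenfin hτ).isOverconvergent_iff
    (Fact.out : p.Prime).pos x

/-- Let `(A, ν)` be an integral domain with `pA = 0` and a negative
pseudovaluation in which every nonzero element is localizing.  Let `A → B` be injective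
of finite type and generically finite (there is `c ≠ 0` such that `B_c` is a finite free
`A_c`-module), and equip `B` with an admissible pseudovaluation `τ`.  Then
`W(A) ∩ W†(B) = W†(A)`. -/
theorem statement14 (p : ℕ) [Fact p.Prime] (A B : Type*)
    [CommRing A] [IsDomain A] [CommRing B] [Algebra A B]
    (hpA : ((p : ℕ) : A) = 0)
    (ν : A → EReal) (hν : IsNegativePV ν)
    (hloc : ∀ a : A, a ≠ 0 → IsLocalizing ν a)
    (hinj : Function.Injective (algebraMap A B))
    (hft : Algebra.FiniteType A B)
    (hgenfin : ∃ c : A, c ≠ 0 ∧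
      (@Module.Finite (Localization.Away c) (Localization.Away (algebraMap A B c)) _ _
        (@Algebra.toModule _ _ _ _ ((Localization.awayMap (algebraMap A B) c).toAlgebra)) ∧
       @Module.Free (Localization.Away c) (Localization.Away (algebraMap A B c)) _ _
        (@Algebra.toModule _ _ _ _ ((Localization.awayMap (algebraMap A B) c).toAlgebra))))
    (τ : B → EReal) (hτ : IsAdmissiblePV ν τ) :
    ∀ x : WittVector p A, IsOverconvergent p ν x ↔
      IsOverconvergent p τ (WittVector.map (algebraMap A B) x) :=
  statement14_general p A B ν hν hloc hinj hgenfin τ hτ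
end
end

section
/- Let p be a prime and let (A, ν) be a commutative ring with pA = 0 and a proper pseudovaluation, and let ε > 0. Let α ∈ W(A) be a Witt vector lying in the image of the Verschiebung V, i.e. α = V(η) for some η ∈ W(A), and suppose γ_ε(α) ≥ 0. Then 1 − α is a unit in W(A) and γ_ε((1 − α)^{−1}) ≥ 0. -/
open scoped Classical

noncomputable section

/-!
Write `V^i[a]` for the `i`-fold Verschiebung of the Teichmüller representative of `a`. The bound
`c ≤ γ_ε(x)` says `(c - i) p^i / ε ≤ ν(x_i)` for all `i`, and this coefficientwise form is stable
under sums, because the Witt addition polynomial `S_n` is weighted homogeneous of degree `p^n` when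
`X_{b,i}` has weight `p^i`, and under products, because in characteristic `p` the product of
truncations `∑_{i ≤ n} V^i[x_i]` and `∑_{j ≤ n} V^j[y_j]` is `∑ V^{i+j}[x_i^{p^j} y_j^{p^i}]`.
Since `α = V(η)`, the power `α^k` lies in `V^k W(A)`, so the geometric series `∑ α^k` converges
`V`-adically to an inverse of `1 - α` whose `n`-th coefficient is that of the partial sum
`∑_{k ≤ n} α^k`; each partial sum has nonnegative Gauss norm, hence so does the inverse.
-/

open MvPolynomial

namespace IsPseudovaluation

variable {A : Type*} [CommRing A] {ν : A → EReal}

theorem le_map_neg (hν : IsPseudovaluation ν) (a : A) : ν a ≤ ν (-a) := by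
  simpa [hν.map_zero] using hν.min_le_sub 0 a

theorem min_le_map_add (hν : IsPseudovaluation ν) (a b : A) : min (ν a) (ν b) ≤ ν (a + b) := by
  simpa using (min_le_min le_rfl (hν.le_map_neg b)).trans (hν.min_le_sub a (-b))

theorem nonneg_map_natCast (hν : IsPseudovaluation ν) (n : ℕ) : 0 ≤ ν (n : A) := by
  induction n with
  | zero => simp [hν.map_zero]
  | succ n ih =>
    rw [Nat.cast_succ]
    exact (le_min ih hν.map_one.ge).trans (hν.min_le_map_add _ _)

theorem nonneg_map_intCast (hν : IsPseudovaluation ν) (m : ℤ) : 0 ≤ ν (m : A) := by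
  obtain ⟨n, rfl | rfl⟩ := Int.eq_nat_or_neg m
  · exact_mod_cast hν.nonneg_map_natCast n
  · rw [Int.cast_neg, Int.cast_natCast]
    exact (hν.nonneg_map_natCast n).trans (hν.le_map_neg _)

theorem le_map_sum (hν : IsPseudovaluation ν) {ι : Type*} (s : Finset ι) (f : ι → A) {t : EReal}
    (h : ∀ i ∈ s, t ≤ ν (f i)) : t ≤ ν (∑ i ∈ s, f i) := by
  induction s using Finset.cons_induction with
  | empty => simp [hν.map_zero]
  | cons i s his ih =>
    rw [Finset.sum_cons]
    exact (le_min (h i (s.mem_cons_self i)) (ih fun j hj => h j (Finset.mem_cons_of_mem hj))).trans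
      (hν.min_le_map_add _ _)

theorem add_le_map_mul (hν : IsPseudovaluation ν) (hproper : ∀ a : A, ν a ≠ ⊥) {a b : A}
    {t u : EReal} (ht : t ≤ ν a) (hu : u ≤ ν b) : t + u ≤ ν (a * b) :=
  (add_le_add ht hu).trans (hν.add_le_mul a b (hproper a) (hproper b))

theorem le_map_pow (hν : IsPseudovaluation ν) (hproper : ∀ a : A, ν a ≠ ⊥) {a : A} {r : ℝ}
    (h : (r : EReal) ≤ ν a) (k : ℕ) : ((k * r : ℝ) : EReal) ≤ ν (a ^ k) := by
  induction k with
  | zero => simp [hν.map_one]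
  | succ k ih =>
    rw [pow_succ, Nat.cast_succ, add_one_mul, EReal.coe_add]
    exact hν.add_le_map_mul hproper ih h

theorem le_map_prod (hν : IsPseudovaluation ν) (hproper : ∀ a : A, ν a ≠ ⊥) {ι : Type*}
    (s : Finset ι) (f : ι → A) (r : ι → ℝ) (h : ∀ i ∈ s, (r i : EReal) ≤ ν (f i)) :
    ((∑ i ∈ s, r i : ℝ) : EReal) ≤ ν (∏ i ∈ s, f i) := by
  induction s using Finset.cons_induction with
  | empty => simp [hν.map_one]
  | cons i s his ih =>
    rw [Finset.sum_cons, Finset.prod_cons, EReal.coe_add]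
    exact hν.add_le_map_mul hproper (h i (s.mem_cons_self i))
      (ih fun j hj => h j (Finset.mem_cons_of_mem hj))

theorem le_map_aeval (hν : IsPseudovaluation ν) (hproper : ∀ a : A, ν a ≠ ⊥) {σ : Type*}
    (P : MvPolynomial σ ℤ) (v : σ → A) (r : σ → ℝ) (hr : ∀ s, (r s : EReal) ≤ ν (v s)) {t : ℝ}
    (ht : ∀ d ∈ P.support, t ≤ d.sum fun s e => e * r s) : (t : EReal) ≤ ν (aeval v P) := by
  rw [aeval_def, eval₂_eq]
  refine hν.le_map_sum _ _ fun d hd => ?_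
  have hcoeff : 0 ≤ ν (algebraMap ℤ A (P.coeff d)) := by
    simpa using hν.nonneg_map_intCast (P.coeff d)
  have hmonomial := hν.le_map_prod hproper d.support (fun s => v s ^ d s) (fun s => d s * r s)
    fun s _ => hν.le_map_pow hproper (hr s) (d s)
  calc (t : EReal) ≤ 0 + ((∑ s ∈ d.support, d s * r s : ℝ) : EReal) := by
        rw [zero_add]; exact_mod_cast ht d hd
    _ ≤ _ := hν.add_le_map_mul hproper hcoeff hmonomial

end IsPseudovaluation

namespace WittVector

section WittAddHomogeneous

variable (p : ℕ)

def wittWeight : Fin 2 × ℕ → ℕ := fun s => p ^ s.2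

theorem isWeightedHomogeneous_rename_wittPolynomial (b : Fin 2) (n : ℕ) :
    (rename (Prod.mk b) (wittPolynomial p ℚ n)).IsWeightedHomogeneous (wittWeight p) (p ^ n) := by
  rw [wittPolynomial, map_sum]
  refine IsWeightedHomogeneous.sum _ _ _ fun i hi => ?_
  rw [rename_monomial, Finsupp.mapDomain_single]
  refine isWeightedHomogeneous_monomial _ _ _ ?_
  rw [Finsupp.weight_apply, Finsupp.sum_single_index (by simp), smul_eq_mul, wittWeight,
    ← pow_add, Nat.sub_add_cancel (Finset.mem_range_succ_iff.mp hi)]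

theorem isWeightedHomogeneous_wittStructureRat_add [Fact p.Prime] (n : ℕ) :
    (wittStructureRat p (X 0 + X 1 : MvPolynomial (Fin 2) ℚ) n).IsWeightedHomogeneous
      (wittWeight p) (p ^ n) := by
  induction n using Nat.strong_induction_on with
  | _ n ih =>
    rw [wittStructureRat_rec, map_add, bind₁_X_right, bind₁_X_right]
    refine ((((isWeightedHomogeneous_rename_wittPolynomial p 0 n).add
      (isWeightedHomogeneous_rename_wittPolynomial p 1 n)).sub
      (IsWeightedHomogeneous.sum _ _ _ fun i hi => ?_)).C_mul _)
    have hi := Finset.mem_range.mp hi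
    have := ((ih i hi).pow (p ^ (n - i))).C_mul ((p : ℚ) ^ i)
    rwa [smul_eq_mul, ← pow_add, Nat.sub_add_cancel hi.le] at this

theorem isWeightedHomogeneous_wittAdd [Fact p.Prime] (n : ℕ) :
    (wittAdd p n).IsWeightedHomogeneous (wittWeight p) (p ^ n) := by
  have hmap : MvPolynomial.map (Int.castRingHom ℚ) (wittAdd p n) =
      wittStructureRat p (X 0 + X 1 : MvPolynomial (Fin 2) ℚ) n := by
    rw [wittAdd, map_wittStructureInt]
    simp
  intro d hd
  refine isWeightedHomogeneous_wittStructureRat_add p n ?_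
  rw [← hmap, MvPolynomial.coeff_map]
  simpa using hd

end WittAddHomogeneous

section Verschiebung

variable {p : ℕ} [Fact p.Prime] {R : Type*} [CommRing R]

theorem coeff_iterate_verschiebung_teichmuller (a : R) (m n : ℕ) :
    (verschiebung^[m] (teichmuller p a)).coeff n = if n = m then a else 0 := by
  split_ifs with h
  · subst h
    simpa using iterate_verschiebung_coeff (teichmuller p a) n 0
  · rcases Nat.lt_or_gt_of_ne h with h | h
    · exact iterate_verschiebung_coeff_eq_zero _ h
    · obtain ⟨k, rfl⟩ := Nat.exists_eq_add_of_lt h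
      rw [show m + k + 1 = k + 1 + m by ring, iterate_verschiebung_coeff,
        teichmuller_coeff_pos _ _ _ k.succ_pos]

theorem truncate_iterate_verschiebung {m k : ℕ} (h : m ≤ k) (z : WittVector p R) :
    truncate m (verschiebung^[k] z) = 0 := by
  rw [← RingHom.mem_ker, mem_ker_truncate]
  exact fun i hi => iterate_verschiebung_coeff_eq_zero z (hi.trans_le h)

theorem coeff_eq_of_truncate_eq {n : ℕ} {x y : WittVector p R}
    (h : truncate (n + 1) x = truncate (n + 1) y) : x.coeff n = y.coeff n := by
  simpa [coeff_truncate] using congrArg (TruncatedWittVector.coeff (Fin.last n)) h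

theorem truncate_sum_iterate_verschiebung_teichmuller (x : WittVector p R) (m : ℕ) :
    truncate m (∑ i ∈ Finset.range m, verschiebung^[i] (teichmuller p (x.coeff i))) =
      truncate m x := by
  have hsupport : ∀ i n, (verschiebung^[i] (teichmuller p (x.coeff i))).coeff n ≠ 0 → n = i :=
    fun i n h => by_contra fun hne => h (by rw [coeff_iterate_verschiebung_teichmuller, if_neg hne])
  ext n
  rw [coeff_truncate, coeff_truncate, sum_coeff_eq_coeff_sum _
    fun n => ⟨fun a b => Subtype.ext ((hsupport _ n a.2.2).symm.trans (hsupport _ n b.2.2))⟩,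
    Finset.sum_eq_single_of_mem _ (Finset.mem_range.mpr n.isLt) fun i _ hi => ?_]
  · simp [coeff_iterate_verschiebung_teichmuller]
  · rw [coeff_iterate_verschiebung_teichmuller, if_neg (Ne.symm hi)]

section CharP

variable [CharP R p]

theorem iterate_frobenius_teichmuller (j : ℕ) (a : R) :
    frobenius^[j] (teichmuller p a) = teichmuller p (a ^ p ^ j) := by
  ext n
  rw [iterate_frobenius_coeff]
  cases n with
  | zero => simp only [teichmuller_coeff_zero]
  | succ n =>
    rw [teichmuller_coeff_pos _ _ _ n.succ_pos, teichmuller_coeff_pos _ _ _ n.succ_pos,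
      zero_pow (pow_ne_zero j (Fact.out : p.Prime).ne_zero)]

theorem iterate_verschiebung_teichmuller_mul (a b : R) (i j : ℕ) :
    verschiebung^[i] (teichmuller p a) * verschiebung^[j] (teichmuller p b) =
      verschiebung^[i + j] (teichmuller p (a ^ p ^ j * b ^ p ^ i)) := by
  rw [iterate_verschiebung_mul, iterate_frobenius_teichmuller, iterate_frobenius_teichmuller,
    map_mul]

theorem exists_verschiebung_pow_eq_iterate_verschiebung (η : WittVector p R) (k : ℕ) :
    ∃ z, verschiebung η ^ k = verschiebung^[k] z := by
  induction k with
  | zero => exact ⟨1, by simp⟩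
  | succ k ih =>
    obtain ⟨z, hz⟩ := ih
    refine ⟨frobenius^[1] z * frobenius^[k] η, ?_⟩
    rw [pow_succ, hz, ← iterate_verschiebung_mul, Function.iterate_one]

end CharP

/-- The `V`-adic limit of the partial sums `∑_{k ≤ n} α^k`, meaningful when `α^k ∈ V^k W(R)`. -/
def geomSeries (α : WittVector p R) : WittVector p R :=
  mk p fun n => (∑ k ∈ Finset.range (n + 1), α ^ k).coeff n

section GeomSeries

variable {α : WittVector p R}

theorem truncate_pow_eq_zero (hα : ∀ k, ∃ z : WittVector p R, α ^ k = verschiebung^[k] z)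
    {m k : ℕ} (h : m ≤ k) : truncate m (α ^ k : WittVector p R) = 0 := by
  obtain ⟨z, hz⟩ := hα k
  rw [hz, truncate_iterate_verschiebung h]

theorem truncate_sum_range_pow (hα : ∀ k, ∃ z : WittVector p R, α ^ k = verschiebung^[k] z)
    {m n : ℕ} (h : m ≤ n) :
    truncate m (∑ k ∈ Finset.range n, α ^ k : WittVector p R) =
      truncate m (∑ k ∈ Finset.range m, α ^ k : WittVector p R) := by
  rw [← Finset.sum_range_add_sum_Ico _ h, map_add, map_sum (truncate m) _ (Finset.Ico m n),
    Finset.sum_eq_zero fun k hk => truncate_pow_eq_zero hα (Finset.mem_Ico.mp hk).1, add_zero]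

theorem truncate_geomSeries (hα : ∀ k, ∃ z : WittVector p R, α ^ k = verschiebung^[k] z)
    (n : ℕ) :
    truncate (n + 1) (geomSeries α) =
      truncate (n + 1) (∑ k ∈ Finset.range (n + 1), α ^ k : WittVector p R) := by
  ext i
  rw [coeff_truncate, coeff_truncate, geomSeries, coeff_mk]
  refine coeff_eq_of_truncate_eq ?_
  rw [truncate_sum_range_pow hα (Nat.succ_le_succ (Nat.lt_succ_iff.mp i.isLt))]

theorem one_sub_mul_geomSeries (hα : ∀ k, ∃ z : WittVector p R, α ^ k = verschiebung^[k] z) :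
    (1 - α) * geomSeries α = 1 := by
  ext n
  refine coeff_eq_of_truncate_eq ?_
  rw [map_mul, truncate_geomSeries hα, ← map_mul, mul_neg_geom_sum, map_sub,
    truncate_pow_eq_zero hα le_rfl, sub_zero]

end GeomSeries

end Verschiebung

end WittVector

theorem sub_mul_pow_div_le_finsuppSum {τ : Type*} (p : ℕ) {ε : ℝ} (hε : 0 < ε) (c : ℝ) (n : ℕ)
    (k : τ → ℕ) (d : τ →₀ ℕ) (hdeg : (d.sum fun s e => e * p ^ k s) = p ^ n)
    (hk : ∀ s ∈ d.support, k s ≤ n) :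
    (c - n) * (p : ℝ) ^ n / ε ≤ d.sum fun s e => e * ((c - k s) * (p : ℝ) ^ k s / ε) := by
  have hdeg' : ∑ s ∈ d.support, (d s : ℝ) * (p : ℝ) ^ k s = (p : ℝ) ^ n := by
    exact_mod_cast hdeg
  calc (c - n) * (p : ℝ) ^ n / ε = ∑ s ∈ d.support, d s * ((c - n) * (p : ℝ) ^ k s / ε) := by
        rw [← hdeg', Finset.mul_sum, Finset.sum_div]
        exact Finset.sum_congr rfl fun s _ => by ring
    _ ≤ _ := by
        refine Finset.sum_le_sum fun s hs => ?_
        have : (k s : ℝ) ≤ n := by exact_mod_cast hk s hs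
        dsimp only
        gcongr

theorem EReal.coe_le_coe_add_coe_mul_iff {a b w : ℝ} (hw : 0 < w) {e : EReal} (he : e ≠ ⊥) :
    (a : EReal) ≤ b + w * e ↔ (((a - b) / w : ℝ) : EReal) ≤ e := by
  induction e using EReal.rec with
  | bot => exact absurd rfl he
  | top => simp [EReal.coe_mul_top_of_pos hw]
  | coe r =>
    norm_cast
    rw [div_le_iff₀ hw, mul_comm r w]
    constructor <;> intro h <;> linarith

section GaussBound

variable {p : ℕ} {A : Type*} [CommRing A] {ν : A → EReal} {ε : ℝ}

def GaussBound (p : ℕ) (ν : A → EReal) (ε c : ℝ) (x : WittVector p A) : Prop :=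
  ∀ i : ℕ, (((c - i) * (p : ℝ) ^ i / ε : ℝ) : EReal) ≤ ν (x.coeff i)

theorem le_gaussNorm_iff (hp : 0 < p) (hproper : ∀ a : A, ν a ≠ ⊥) (hε : 0 < ε) {c : ℝ}
    {x : WittVector p A} : (c : EReal) ≤ gaussNorm p ν ε x ↔ GaussBound p ν ε c x := by
  rw [gaussNorm, le_iInf_iff]
  refine forall_congr' fun i => ?_
  have hpi : (0 : ℝ) < (p : ℝ) ^ i := pow_pos (Nat.cast_pos.mpr hp) i
  rw [← EReal.coe_coe_eq_natCast, EReal.coe_le_coe_add_coe_mul_iff (by positivity) (hproper _),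
    zpow_neg, zpow_natCast, div_mul_eq_div_div, div_inv_eq_mul, div_mul_eq_mul_div]

end GaussBound

namespace GaussBound

open WittVector

variable {p : ℕ} [Fact p.Prime] {A : Type*} [CommRing A] {ν : A → EReal} {ε c c' : ℝ}
  {x y : WittVector p A}

theorem zero (hν : IsPseudovaluation ν) : GaussBound p ν ε c (0 : WittVector p A) := fun i => by
  simp [hν.map_zero]

theorem add (hν : IsPseudovaluation ν) (hproper : ∀ a : A, ν a ≠ ⊥) (hε : 0 < ε)
    (hx : GaussBound p ν ε c x) (hy : GaussBound p ν ε c y) : GaussBound p ν ε c (x + y) := by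
  intro n
  rw [add_coeff]
  refine hν.le_map_aeval hproper _ _ (fun s => (c - s.2) * (p : ℝ) ^ s.2 / ε) ?_ fun d hd => ?_
  · rintro ⟨b, i⟩
    fin_cases b
    · exact hx i
    · exact hy i
  · refine sub_mul_pow_div_le_finsuppSum p hε c n Prod.snd d ?_ fun s hs => ?_
    · simpa [Finsupp.weight_apply, wittWeight] using
        isWeightedHomogeneous_wittAdd p n (mem_support_iff.mp hd)
    · have := wittAdd_vars p n ((mem_vars_iff_mem_support s).mpr ⟨d, hd, hs⟩)
      rw [Finset.mem_product, Finset.mem_range] at this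
      exact Nat.lt_succ_iff.mp this.2

theorem sum (hν : IsPseudovaluation ν) (hproper : ∀ a : A, ν a ≠ ⊥) (hε : 0 < ε) {ι : Type*}
    (s : Finset ι) (f : ι → WittVector p A) (h : ∀ i ∈ s, GaussBound p ν ε c (f i)) :
    GaussBound p ν ε c (∑ i ∈ s, f i) := by
  induction s using Finset.cons_induction with
  | empty => exact zero hν
  | cons i s his ih =>
    rw [Finset.sum_cons]
    exact (h i (s.mem_cons_self i)).add hν hproper hε
      (ih fun j hj => h j (Finset.mem_cons_of_mem hj))

theorem iterate_verschiebung_teichmuller (hν : IsPseudovaluation ν) {m : ℕ} {a : A}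
    (ha : (((c - m) * (p : ℝ) ^ m / ε : ℝ) : EReal) ≤ ν a) :
    GaussBound p ν ε c (verschiebung^[m] (teichmuller p a)) := fun i => by
  rw [coeff_iterate_verschiebung_teichmuller]
  split_ifs with h
  · exact h ▸ ha
  · simp [hν.map_zero]

theorem one (hν : IsPseudovaluation ν) : GaussBound p ν ε 0 (1 : WittVector p A) := by
  simpa using iterate_verschiebung_teichmuller (m := 0) (a := 1) (ε := ε) (c := 0) hν
    (by simp [hν.map_one])

variable [CharP A p]

theorem mul (hν : IsPseudovaluation ν) (hproper : ∀ a : A, ν a ≠ ⊥) (hε : 0 < ε)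
    (hx : GaussBound p ν ε c x) (hy : GaussBound p ν ε c' y) :
    GaussBound p ν ε (c + c') (x * y) := by
  intro n
  have htrunc : (x * y).coeff n =
      ((∑ i ∈ Finset.range (n + 1), verschiebung^[i] (teichmuller p (x.coeff i))) *
        ∑ j ∈ Finset.range (n + 1), verschiebung^[j] (teichmuller p (y.coeff j))).coeff n := by
    refine coeff_eq_of_truncate_eq ?_
    rw [map_mul, map_mul, truncate_sum_iterate_verschiebung_teichmuller,
      truncate_sum_iterate_verschiebung_teichmuller]
  rw [htrunc, Finset.sum_mul_sum]
  refine sum hν hproper hε _ _ (fun i _ => sum hν hproper hε _ _ fun j _ => ?_) n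
  rw [iterate_verschiebung_teichmuller_mul]
  refine iterate_verschiebung_teichmuller hν ?_
  have hterm := hν.add_le_map_mul hproper (hν.le_map_pow hproper (hx i) (p ^ j))
    (hν.le_map_pow hproper (hy j) (p ^ i))
  convert hterm using 1
  rw [← EReal.coe_add]
  congr 1
  push_cast
  ring

theorem pow (hν : IsPseudovaluation ν) (hproper : ∀ a : A, ν a ≠ ⊥) (hε : 0 < ε)
    (hx : GaussBound p ν ε 0 x) (k : ℕ) : GaussBound p ν ε 0 (x ^ k) := by
  induction k with
  | zero => simpa using one hν
  | succ k ih => simpa [pow_succ] using ih.mul hν hproper hε hx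

theorem geomSeries (hν : IsPseudovaluation ν) (hproper : ∀ a : A, ν a ≠ ⊥) (hε : 0 < ε)
    (hx : GaussBound p ν ε 0 x) : GaussBound p ν ε 0 (geomSeries x) := fun n => by
  rw [WittVector.geomSeries, coeff_mk]
  exact sum hν hproper hε _ _ (fun k _ => hx.pow hν hproper hε k) n

end GaussBound

/-- If `α = V(η)` lies in the image of Verschiebung and `γ_ε(α) ≥ 0`,
then `1 - α` is a unit of `W(A)` and `γ_ε((1 - α)⁻¹) ≥ 0`. -/
theorem statement16 (p : ℕ) [Fact p.Prime] (A : Type*) [CommRing A]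
    (hpA : ((p : ℕ) : A) = 0)
    (ν : A → EReal) (hν : IsPseudovaluation ν) (hproper : ∀ a : A, ν a ≠ ⊥)
    (ε : ℝ) (hε : 0 < ε)
    (α η : WittVector p A) (hα : α = WittVector.verschiebung η)
    (h0 : 0 ≤ gaussNorm p ν ε α) :
    IsUnit (1 - α) ∧
    ∃ β : WittVector p A, (1 - α) * β = 1 ∧ 0 ≤ gaussNorm p ν ε β := by
  have hp : 0 < p := (Fact.out : p.Prime).pos
  rcases subsingleton_or_nontrivial A with _ | _
  · have hinv : (1 - α) * 0 = 1 := WittVector.ext fun _ => Subsingleton.elim _ _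
    refine ⟨.of_mul_eq_one _ hinv, 0, hinv, ?_⟩
    exact_mod_cast (le_gaussNorm_iff hp hproper hε).2 (GaussBound.zero hν)
  have : CharP A p := (CharP.charP_iff_prime_eq_zero Fact.out).2 hpA
  have hinv := WittVector.one_sub_mul_geomSeries
    (hα ▸ WittVector.exists_verschiebung_pow_eq_iterate_verschiebung η)
  refine ⟨.of_mul_eq_one _ hinv, _, hinv, ?_⟩
  have hαbound : GaussBound p ν ε 0 α := (le_gaussNorm_iff hp hproper hε).1 (by exact_mod_cast h0)
  exact_mod_cast (le_gaussNorm_iff hp hproper hε).2 (hαbound.geomSeries hν hproper hε)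
end
end
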